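/- In a modular involutive quantaloid Q, for any object X the set ↓1_X = { m ∈ Q(X,X) : m ≤ 1_X } of coreflexive endomorphisms, with the order inherited from Q(X,X), is a frame (locale) in which binary meet coincides with composition: m ∘ n = m ∧ n for all m, n ≤ 1_X. -/

import Mathlib

/-!
For coreflexive `m, n ≤ 1`, the product `m ≫ n` lies below both `m` and `n`. Conversely, the
modular law with `f = 1` gives `n ⊓ m ≤ (1 ⊓ (m ≫ inv n)) ≫ n`, and `m ≫ inv n ≤ m` because the
involution is monotone and fixes `1`; hence `m ⊓ n ≤ m ≫ n`. Once meet is composition,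
distributivity of `m ⊓ -` over suprema is the sup-preservation of `m ≫ -`.
-/

open CategoryTheory

universe v u

theorem monotone_of_map_sSup {α β : Type*} [CompleteLattice α] [CompleteLattice β] {φ : α → β}
    (h : ∀ S : Set α, φ (sSup S) = ⨆ a ∈ S, φ a) : Monotone φ :=
  OrderHomClass.mono (sSupHom.mk φ fun S => (h S).trans sSup_image.symm)

theorem comp_eq_inf_of_le_id {Q : Type u} [Category.{v} Q] [∀ X Y : Q, CompleteLattice (X ⟶ Y)]
    (sSup_comp : ∀ {X Y Z : Q} (S : Set (X ⟶ Y)) (g : Y ⟶ Z), sSup S ≫ g = ⨆ f ∈ S, f ≫ g)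
    (comp_sSup : ∀ {X Y Z : Q} (f : X ⟶ Y) (S : Set (Y ⟶ Z)), f ≫ sSup S = ⨆ g ∈ S, f ≫ g)
    (inv : ∀ {X Y : Q}, (X ⟶ Y) → (Y ⟶ X))
    (inv_id : ∀ X : Q, inv (𝟙 X) = 𝟙 X)
    (inv_sSup : ∀ {X Y : Q} (S : Set (X ⟶ Y)), inv (sSup S) = ⨆ f ∈ S, inv f)
    (modular : ∀ {X Y Z : Q} (f : X ⟶ Y) (g : Y ⟶ Z) (h : X ⟶ Z),
      (f ≫ g) ⊓ h ≤ (f ⊓ (h ≫ inv g)) ≫ g)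
    {X : Q} {m n : X ⟶ X} (hm : m ≤ 𝟙 X) (hn : n ≤ 𝟙 X) : m ≫ n = m ⊓ n := by
  have comp_mono_left {A B C : Q} (g : B ⟶ C) : Monotone fun f : A ⟶ B => f ≫ g :=
    monotone_of_map_sSup (sSup_comp · g)
  have comp_mono_right {A B C : Q} (f : A ⟶ B) : Monotone fun g : B ⟶ C => f ≫ g :=
    monotone_of_map_sSup (comp_sSup f)
  have inv_le_id : inv n ≤ 𝟙 X := by
    simpa only [inv_id] using monotone_of_map_sSup (inv_sSup (X := X) (Y := X)) hn
  have m_comp_inv_le : m ≫ inv n ≤ m := by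
    simpa only [Category.comp_id] using comp_mono_right m inv_le_id
  refine le_antisymm (le_inf ?_ ?_) ?_
  · simpa only [Category.comp_id] using comp_mono_right m hn
  · simpa only [Category.id_comp] using comp_mono_left n hm
  · calc m ⊓ n = (𝟙 X ≫ n) ⊓ m := by rw [Category.id_comp, inf_comm]
      _ ≤ (𝟙 X ⊓ (m ≫ inv n)) ≫ n := modular (𝟙 X) n m
      _ ≤ m ≫ n := comp_mono_left n (inf_le_right.trans m_comp_inv_le)

theorem stmt_5 {Q : Type u} [Category.{v} Q] [∀ X Y : Q, CompleteLattice (X ⟶ Y)]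
    (sSup_comp : ∀ {X Y Z : Q} (S : Set (X ⟶ Y)) (g : Y ⟶ Z), sSup S ≫ g = ⨆ f ∈ S, f ≫ g)
    (comp_sSup : ∀ {X Y Z : Q} (f : X ⟶ Y) (S : Set (Y ⟶ Z)), f ≫ sSup S = ⨆ g ∈ S, f ≫ g)
    (inv : ∀ {X Y : Q}, (X ⟶ Y) → (Y ⟶ X))
    (inv_inv : ∀ {X Y : Q} (f : X ⟶ Y), inv (inv f) = f)
    (inv_comp : ∀ {X Y Z : Q} (f : X ⟶ Y) (g : Y ⟶ Z), inv (f ≫ g) = inv g ≫ inv f)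
    (inv_id : ∀ X : Q, inv (𝟙 X) = 𝟙 X)
    (inv_sSup : ∀ {X Y : Q} (S : Set (X ⟶ Y)), inv (sSup S) = ⨆ f ∈ S, inv f)
    (modular : ∀ {X Y Z : Q} (f : X ⟶ Y) (g : Y ⟶ Z) (h : X ⟶ Z),
      (f ≫ g) ⊓ h ≤ (f ⊓ (h ≫ inv g)) ≫ g)
    {X : Q} (m : X ⟶ X) (hm : m ≤ 𝟙 X) :
    (∀ n : X ⟶ X, n ≤ 𝟙 X → m ≫ n = m ⊓ n) ∧
    (∀ S : Set (X ⟶ X), (∀ n ∈ S, n ≤ 𝟙 X) → m ⊓ sSup S = ⨆ n ∈ S, m ⊓ n) := by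
  have comp_eq_inf {n : X ⟶ X} (hn : n ≤ 𝟙 X) : m ≫ n = m ⊓ n :=
    comp_eq_inf_of_le_id sSup_comp comp_sSup inv inv_id inv_sSup modular hm hn
  refine ⟨fun n hn => comp_eq_inf hn, fun S hS => ?_⟩
  rw [← comp_eq_inf (sSup_le hS), comp_sSup]
  exact iSup_congr fun n => iSup_congr fun hn => comp_eq_inf (hS n hn)
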